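/- arXiv:1011.6076 — 7 statements merged into one kernel-verified Lean document; each statement's English description precedes it below -/
import Mathlib

section
/- Let ρ be a C-quasi-symmetric forward distance on a metric space (M,d), let x₀ ∈ M, R > 0, and suppose the closed forward ball B̄(x₀, C(1+C)R) is compact. Let μ be a Borel probability measure on M with supp(μ) ⊆ B(x₀,R), and let p > 1. Then E_{μ,p}(x₀) ≤ R^p, E_{μ,p}(x) ≥ R^p for every x outside B̄(x₀, C(1+C)R), and the function x ↦ E_{μ,p}(x) attains its global infimum over M at some point of B̄(x₀, C(1+C)R). -/
open MeasureTheory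

/-- Existence of forward `p`-means: if `ρ` is a `C`-quasi-symmetric
forward distance on a metric space `M`, the closed forward ball `B̄(x₀, C(1+C)R)` is
compact, and `μ` is a Borel probability measure supported in the open forward ball
`B(x₀, R)`, then for `p > 1` the functional `E_{μ,p}(x) = ∫ ρ(x,z)^p dμ(z)` satisfies
`E_{μ,p}(x₀) ≤ R^p`, is `≥ R^p` outside `B̄(x₀, C(1+C)R)`, and attains its global
infimum over `M` at some point of `B̄(x₀, C(1+C)R)`. -/
theorem forward_p_mean_exists
    {M : Type*} [MetricSpace M] [MeasurableSpace M] [BorelSpace M]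
    (ρ : M → M → ℝ)
    (hρ_cont : Continuous fun q : M × M => ρ q.1 q.2)
    (hρ_nonneg : ∀ x y, 0 ≤ ρ x y)
    (hρ_refl : ∀ x, ρ x x = 0)
    (hρ_pos : ∀ x y, x ≠ y → 0 < ρ x y)
    (hρ_tri : ∀ x y z, ρ x z ≤ ρ x y + ρ y z)
    (C : ℝ) (hC : 1 ≤ C)
    (hquasi : ∀ x y, ρ x y ≤ C * ρ y x)
    (x₀ : M) (R : ℝ) (hR : 0 < R)
    (hcompact : IsCompact {y : M | ρ x₀ y ≤ C * (1 + C) * R})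
    (μ : Measure M) [IsProbabilityMeasure μ]
    (hsupp : μ {z : M | ρ x₀ z < R}ᶜ = 0)
    (p : ℝ) (hp : 1 < p) :
    (∫ z, ρ x₀ z ^ p ∂μ) ≤ R ^ p ∧
    (∀ x : M, ¬ ρ x₀ x ≤ C * (1 + C) * R → R ^ p ≤ ∫ z, ρ x z ^ p ∂μ) ∧
    (∃ m : M, ρ x₀ m ≤ C * (1 + C) * R ∧
      ∀ x : M, (∫ z, ρ m z ^ p ∂μ) ≤ ∫ z, ρ x z ^ p ∂μ) := by

  have hp0 : (0:ℝ) ≤ p := by linarith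
  have hC0 : (0:ℝ) < C := lt_of_lt_of_le zero_lt_one hC
  have hae : ∀ᵐ z ∂μ, ρ x₀ z < R := by
    rw [ae_iff]
    exact hsupp
  have hcont2 : ∀ z, Continuous fun x => ρ x z := fun z =>
    hρ_cont.comp (continuous_id.prodMk continuous_const)
  have hcontx : ∀ x, Continuous fun z => ρ x z := fun x =>
    hρ_cont.comp (continuous_const.prodMk continuous_id)
  have hmeas : ∀ x, AEStronglyMeasurable (fun z => ρ x z ^ p) μ := fun x =>
    ((hcontx x).rpow_const (fun z => Or.inr hp0)).aestronglyMeasurable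
  have hint : ∀ x, Integrable (fun z => ρ x z ^ p) μ := by
    intro x
    refine Integrable.mono' (integrable_const ((C * ρ x₀ x + R) ^ p)) (hmeas x) ?_
    filter_upwards [hae] with z hz
    rw [Real.norm_eq_abs, abs_of_nonneg (Real.rpow_nonneg (hρ_nonneg x z) p)]
    refine Real.rpow_le_rpow (hρ_nonneg x z) ?_ hp0
    calc ρ x z ≤ ρ x x₀ + ρ x₀ z := hρ_tri x x₀ z
    _ ≤ C * ρ x₀ x + R := add_le_add (hquasi x x₀) hz.le
  have h1 : (∫ z, ρ x₀ z ^ p ∂μ) ≤ R ^ p := by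
    calc (∫ z, ρ x₀ z ^ p ∂μ) ≤ ∫ _, R ^ p ∂μ := by
          refine integral_mono_ae (hint x₀) (integrable_const _) ?_
          filter_upwards [hae] with z hz
          exact Real.rpow_le_rpow (hρ_nonneg _ _) hz.le hp0
    _ = R ^ p := by simp
  have h2 : ∀ x : M, ¬ ρ x₀ x ≤ C * (1 + C) * R → R ^ p ≤ ∫ z, ρ x z ^ p ∂μ := by
    intro x hx
    push_neg at hx
    calc R ^ p = ∫ _, R ^ p ∂μ := by simp
    _ ≤ ∫ z, ρ x z ^ p ∂μ := by
        refine integral_mono_ae (integrable_const _) (hint x) ?_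
        filter_upwards [hae] with z hz
        refine Real.rpow_le_rpow hR.le ?_ hp0
        have h3 := hρ_tri x₀ z x
        have h4 := hquasi z x
        have h5 : C * R ≤ C * ρ x z := by
          nlinarith [mul_nonneg (mul_nonneg (sub_nonneg.2 hC) (by linarith : (0:ℝ) ≤ C + 1)) hR.le]
        exact le_of_mul_le_mul_left h5 hC0
  have hEcont : Continuous fun x => ∫ z, ρ x z ^ p ∂μ := by
    rw [continuous_iff_continuousAt]
    intro x
    have hopen : {x' : M | ρ x₀ x' < ρ x₀ x + 1} ∈ nhds x :=
      (isOpen_lt (hcontx x₀) continuous_const).mem_nhds (by simp)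
    refine continuousAt_of_dominated (bound := fun _ => (C * (ρ x₀ x + 1) + R) ^ p)
      (Filter.Eventually.of_forall fun x' => hmeas x') ?_ (integrable_const _) ?_
    · filter_upwards [hopen] with x' hx'
      filter_upwards [hae] with z hz
      rw [Real.norm_eq_abs, abs_of_nonneg (Real.rpow_nonneg (hρ_nonneg x' z) p)]
      refine Real.rpow_le_rpow (hρ_nonneg x' z) ?_ hp0
      calc ρ x' z ≤ ρ x' x₀ + ρ x₀ z := hρ_tri x' x₀ z
      _ ≤ C * ρ x₀ x' + R := add_le_add (hquasi x' x₀) hz.le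
      _ ≤ C * (ρ x₀ x + 1) + R := by nlinarith [hx'.le]
    · refine ae_of_all _ fun z => ?_
      exact ((hcont2 z).continuousAt).rpow_const (Or.inr hp0)
  have hx₀mem : x₀ ∈ {y : M | ρ x₀ y ≤ C * (1 + C) * R} := by
    simp only [Set.mem_setOf_eq, hρ_refl]
    positivity
  obtain ⟨m, hmK, hmin⟩ := hcompact.exists_isMinOn ⟨x₀, hx₀mem⟩ hEcont.continuousOn
  refine ⟨h1, h2, m, hmK, fun x => ?_⟩
  by_cases hxK : ρ x₀ x ≤ C * (1 + C) * R
  · exact hmin hxK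
  · exact le_trans (hmin hx₀mem) (le_trans h1 (h2 x hxK))
end

section
/- Let ρ be a C-quasi-symmetric forward distance on a metric space (M,d), let x₀ ∈ M, R > 0, and suppose the closed forward ball B̄(x₀, C(1+C)R) is compact. Let μ be a Borel probability measure on M with supp(μ) ⊆ B(x₀,R). Then the function F_μ(x) = ∫ ρ(x,z) dμ(z) attains its global infimum over M at some point of B̄(x₀, C(1+C)R). -/
open MeasureTheory

/-- Existence of a forward median: if `ρ` is a `C`-quasi-symmetric
forward distance on a metric space `M`, the closed forward ball `B̄(x₀, C(1+C)R)` is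
compact, and `μ` is a Borel probability measure supported in `B(x₀, R)`, then the
functional `F_μ(x) = ∫ ρ(x,z) dμ(z)` attains its global infimum over `M` at some point
of `B̄(x₀, C(1+C)R)`. -/
theorem forward_median_exists
    {M : Type*} [MetricSpace M] [MeasurableSpace M] [BorelSpace M]
    (ρ : M → M → ℝ)
    (hρ_cont : Continuous fun q : M × M => ρ q.1 q.2)
    (hρ_nonneg : ∀ x y, 0 ≤ ρ x y)
    (hρ_refl : ∀ x, ρ x x = 0)
    (hρ_pos : ∀ x y, x ≠ y → 0 < ρ x y)
    (hρ_tri : ∀ x y z, ρ x z ≤ ρ x y + ρ y z)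
    (C : ℝ) (hC : 1 ≤ C)
    (hquasi : ∀ x y, ρ x y ≤ C * ρ y x)
    (x₀ : M) (R : ℝ) (hR : 0 < R)
    (hcompact : IsCompact {y : M | ρ x₀ y ≤ C * (1 + C) * R})
    (μ : Measure M) [IsProbabilityMeasure μ]
    (hsupp : μ {z : M | ρ x₀ z < R}ᶜ = 0) :
    ∃ m : M, ρ x₀ m ≤ C * (1 + C) * R ∧
      ∀ x : M, (∫ z, ρ m z ∂μ) ≤ ∫ z, ρ x z ∂μ := by
  have hC0 : (0:ℝ) < C := lt_of_lt_of_le one_pos hC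
  have hCR : 0 < C * (1 + C) * R := mul_pos (mul_pos hC0 (by linarith)) hR
  have h1C : (1:ℝ) ≤ C * (1 + C) := by nlinarith
  have hRle : R ≤ C * (1 + C) * R := le_mul_of_one_le_left hR.le h1C
  -- continuity in the second and first variable
  have hcx : ∀ x : M, Continuous (fun z => ρ x z) :=
    fun x => hρ_cont.comp (continuous_const.prodMk continuous_id)
  have hcy : ∀ y : M, Continuous (fun x => ρ x y) :=
    fun y => hρ_cont.comp (continuous_id.prodMk continuous_const)
  -- a.e. the points are in the forward ball of radius R
  have hae : ∀ᵐ z ∂μ, ρ x₀ z < R := by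
    rw [ae_iff]; exact hsupp
  -- integrability
  have hK' : IsCompact {z : M | ρ x₀ z ≤ R} :=
    hcompact.of_isClosed_subset (isClosed_le (hcx x₀) continuous_const)
      (fun z hz => le_trans hz hRle)
  have hint : ∀ x : M, Integrable (fun z => ρ x z) μ := by
    intro x
    obtain ⟨B, hB⟩ := hK'.exists_bound_of_continuousOn (hcx x).continuousOn
    refine Integrable.mono' (integrable_const B) (hcx x).aestronglyMeasurable ?_
    filter_upwards [hae] with z hz
    exact hB z (le_of_lt hz)
  -- continuity of the functional
  have hFcont : Continuous (fun x => ∫ z, ρ x z ∂μ) := by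
    rw [continuous_iff_continuousAt]
    intro x
    have ht : Filter.Tendsto (fun x' => ρ x' x) (nhds x) (nhds 0) := by
      simpa [hρ_refl x] using (hcy x).tendsto x
    have h1 : ∀ᶠ x' in nhds x, ρ x' x < 1 := ht.eventually_lt_const one_pos
    apply continuousAt_of_dominated (bound := fun z => 1 + ρ x z)
    · exact Filter.Eventually.of_forall fun x' => (hcx x').aestronglyMeasurable
    · filter_upwards [h1] with x' hx'
      refine Filter.Eventually.of_forall fun z => ?_
      rw [Real.norm_of_nonneg (hρ_nonneg _ _)]
      calc ρ x' z ≤ ρ x' x + ρ x z := hρ_tri _ _ _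
        _ ≤ 1 + ρ x z := by linarith
    · exact (integrable_const 1).add (hint x)
    · exact Filter.Eventually.of_forall fun z => ((hcy z).continuousAt)
  -- minimize over the compact set
  have hx₀K : x₀ ∈ {y : M | ρ x₀ y ≤ C * (1 + C) * R} := by
    simp only [Set.mem_setOf_eq, hρ_refl]; exact le_of_lt hCR
  obtain ⟨m, hmK, hmin⟩ :=
    hcompact.exists_isMinOn ⟨x₀, hx₀K⟩ hFcont.continuousOn
  refine ⟨m, hmK, fun x => ?_⟩
  by_cases hx : ρ x₀ x ≤ C * (1 + C) * R
  · exact hmin hx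
  · push_neg at hx
    have hFx0 : (∫ z, ρ x₀ z ∂μ) ≤ R := by
      calc (∫ z, ρ x₀ z ∂μ) ≤ ∫ _, R ∂μ := by
            refine integral_mono_ae (hint x₀) (integrable_const R) ?_
            filter_upwards [hae] with z hz
            exact le_of_lt hz
        _ = R := by simp
    have hFx : R ≤ ∫ z, ρ x z ∂μ := by
      have haeR : ∀ᵐ z ∂μ, R ≤ ρ x z := by
        filter_upwards [hae] with z hz
        have h2 : ρ x₀ x ≤ ρ x₀ z + ρ z x := hρ_tri _ _ _
        have h3 : ρ z x ≤ C * ρ x z := hquasi z x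
        nlinarith [hρ_nonneg x z, mul_pos hC0 hR, mul_nonneg (mul_nonneg (sub_nonneg.2 hC) (by linarith : (0:ℝ) ≤ C + 1)) hR.le, mul_le_mul_of_nonneg_left h3 hC0.le]
      calc R = ∫ _, R ∂μ := by simp
        _ ≤ ∫ z, ρ x z ∂μ := integral_mono_ae (integrable_const R) (hint x) haeR
    calc (∫ z, ρ m z ∂μ) ≤ ∫ z, ρ x₀ z ∂μ := hmin hx₀K
      _ ≤ R := hFx0
      _ ≤ ∫ z, ρ x z ∂μ := hFx
end

section
/- Let F be the Minkowski gauge of a compact convex body K ⊂ ℝⁿ with 0 in its interior, let C ≥ 1 satisfy F(−v) ≤ C·F(v) for all v, and let μ be a Borel probability measure supported in the compact ball B̄(x₀,R) whose support is not contained in a single affine line. Assume that for every z ∈ B̄(x₀,R), the function x ↦ F(z−x) is strictly convex along every nonconstant segment contained in B̄(x₀, C(1+C)R) whose affine line does not pass through z. Then the median functional F_μ is strictly convex on B̄(x₀, C(1+C)R) and has a unique minimizer m over B̄(x₀, C(1+C)R) (the median of μ in this ball). -/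
open MeasureTheory Set Topology

/-!
The pointwise gap `a F(z - x) + b F(z - y) - F(z - (a x + b y))` is nonnegative by convexity of
the gauge, and it is positive for every `z` of the support off the line through `x` and `y`. Since
the support is not contained in a line, that set has positive measure, so the gap has positive
integral: `F_μ` is strictly convex. The ball is compact and `F_μ` is Lipschitz, so a minimizer
exists, and strict convexity makes it unique.
-/

section Gauge

variable {E : Type*} [AddCommGroup E] [Module ℝ E] {K : Set E}

theorem convexOn_gauge (hc : Convex ℝ K) (hK : Absorbent ℝ K) : ConvexOn ℝ univ (gauge K) :=
  ⟨convex_univ, fun x _ y _ a b ha hb _ =>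
    calc gauge K (a • x + b • y) ≤ gauge K (a • x) + gauge K (b • y) := gauge_add_le hc hK _ _
      _ = a • gauge K x + b • gauge K y := by
        rw [gauge_smul_of_nonneg ha, gauge_smul_of_nonneg hb]⟩

theorem convexOn_gauge_sub_left (hc : Convex ℝ K) (hK : Absorbent ℝ K) (z : E) :
    ConvexOn ℝ univ fun x => gauge K (z - x) :=
  (convexOn_gauge hc hK).comp_affineMap (AffineMap.const ℝ E z - AffineMap.id ℝ E)

theorem convex_setOf_gauge_sub_le (hc : Convex ℝ K) (hK : Absorbent ℝ K) (x₀ : E) (r : ℝ) :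
    Convex ℝ {x | gauge K (x - x₀) ≤ r} := by
  simpa using ((convexOn_gauge hc hK).comp_affineMap
    (AffineMap.id ℝ E - AffineMap.const ℝ E x₀)).convex_le r

end Gauge

section NormedGauge

variable {E : Type*} [NormedAddCommGroup E] [NormedSpace ℝ E] {K : Set E}

theorem isCompact_setOf_gauge_sub_le [ProperSpace E] (hc : Convex ℝ K) (h₀ : K ∈ 𝓝 0)
    (hb : Bornology.IsBounded K) (x₀ : E) (r : ℝ) : IsCompact {x | gauge K (x - x₀) ≤ r} := by
  obtain ⟨M, hM, hKM⟩ := hb.subset_closedBall_lt 0 0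
  refine Metric.isCompact_of_isClosed_isBounded
    (isClosed_le ((continuous_gauge hc h₀).comp (continuous_sub_right x₀)) continuous_const)
    ((Metric.isBounded_closedBall (x := x₀) (r := M * r)).subset fun x hx => ?_)
  have hle : ‖x - x₀‖ / M ≤ gauge K (x - x₀) :=
    le_gauge_of_subset_closedBall (absorbent_nhds_zero h₀) hM.le hKM
  rw [Metric.mem_closedBall, dist_eq_norm, ← div_le_iff₀' hM]
  exact hle.trans hx

theorem integrable_gauge_sub [MeasurableSpace E] [BorelSpace E] {μ : Measure E}
    [IsFiniteMeasure μ] (hc : Convex ℝ K) (h₀ : K ∈ 𝓝 0) {x₀ : E} {R : ℝ}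
    (hμ : ∀ᵐ z ∂μ, gauge K (z - x₀) ≤ R) (x : E) : Integrable (fun z => gauge K (z - x)) μ := by
  refine Integrable.mono' (integrable_const (R + gauge K (x₀ - x)))
    ((continuous_gauge hc h₀).comp (continuous_sub_right x)).aestronglyMeasurable ?_
  filter_upwards [hμ] with z hz
  rw [Real.norm_of_nonneg (gauge_nonneg _)]
  calc gauge K (z - x) = gauge K ((z - x₀) + (x₀ - x)) := by rw [sub_add_sub_cancel]
    _ ≤ gauge K (z - x₀) + gauge K (x₀ - x) := gauge_add_le hc (absorbent_nhds_zero h₀) _ _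
    _ ≤ R + gauge K (x₀ - x) := by gcongr

end NormedGauge

theorem LipschitzWith.integral_comp_sub {E : Type*} [SeminormedAddCommGroup E]
    [MeasurableSpace E] {μ : Measure E} [IsProbabilityMeasure μ] {f : E → ℝ} {L : NNReal}
    (hf : LipschitzWith L f) (hint : ∀ x, Integrable (fun z => f (z - x)) μ) :
    LipschitzWith L fun x => ∫ z, f (z - x) ∂μ := by
  refine LipschitzWith.of_dist_le_mul fun x y => ?_
  rw [dist_eq_norm, ← integral_sub (hint x) (hint y)]
  calc ‖∫ z, f (z - x) - f (z - y) ∂μ‖ ≤ L * dist x y * μ.real univ :=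
        norm_integral_le_of_norm_le_const (ae_of_all _ fun z => ?_)
    _ = L * dist x y := by rw [probReal_univ, mul_one]
  rw [← dist_eq_norm, ← dist_sub_left z x y]
  exact hf.dist_le_mul _ _

section StrictConvexity

variable {α E : Type*} [MeasurableSpace α] {μ : Measure α} [AddCommGroup E] [Module ℝ E]

theorem strictConvexOn_integral {s : Set E} {φ : α → E → ℝ} (hs : Convex ℝ s)
    (hconv : ∀ z, ConvexOn ℝ s (φ z)) (hint : ∀ x ∈ s, Integrable (fun z => φ z x) μ)
    (hstrict : ∀ x ∈ s, ∀ y ∈ s, x ≠ y →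
      0 < μ {z | StrictConvexOn ℝ (segment ℝ x y) (φ z)}) :
    StrictConvexOn ℝ s fun x => ∫ z, φ z x ∂μ := by
  refine ⟨hs, fun x hx y hy hxy a b ha hb hab => ?_⟩
  have hw : a • x + b • y ∈ s := hs hx hy ha.le hb.le hab
  set gap : α → ℝ := fun z => a * φ z x + b * φ z y - φ z (a • x + b • y)
  have hgap_nonneg : 0 ≤ gap := fun z => sub_nonneg.2 ((hconv z).2 hx hy ha.le hb.le hab)
  have hax := (hint x hx).const_mul a
  have hby := (hint y hy).const_mul b
  have haxby : Integrable (fun z => a * φ z x + b * φ z y) μ := hax.add hby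
  have hgap_int : Integrable gap μ := haxby.sub (hint _ hw)
  have hgap_pos : 0 < ∫ z, gap z ∂μ := by
    refine (integral_pos_iff_support_of_nonneg hgap_nonneg hgap_int).2
      ((hstrict x hx y hy hxy).trans_le (measure_mono fun z hz => ?_))
    exact (sub_pos.2 (hz.2 (left_mem_segment ℝ x y) (right_mem_segment ℝ x y) hxy ha hb hab)).ne'
  simp only [gap] at hgap_pos
  rw [integral_sub haxby (hint _ hw), integral_add hax hby, integral_const_mul,
    integral_const_mul] at hgap_pos
  simp only [smul_eq_mul]
  linarith

end StrictConvexity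

theorem StrictConvexOn.existsUnique_isMinOn {E β : Type*} [AddCommGroup E] [Module ℝ E]
    [TopologicalSpace E] [AddCommGroup β] [LinearOrder β] [IsOrderedAddMonoid β] [Module ℝ β]
    [PosSMulMono ℝ β] [TopologicalSpace β] [OrderClosedTopology β] {s : Set E} {f : E → β}
    (hf : StrictConvexOn ℝ s f) (hs : IsCompact s) (hne : s.Nonempty) (hcont : ContinuousOn f s) :
    ∃! m, m ∈ s ∧ IsMinOn f s m := by
  obtain ⟨m, hm, hmin⟩ := hs.exists_isMinOn hne hcont
  exact ⟨m, ⟨hm, hmin⟩, fun m' ⟨hm', hmin'⟩ => hf.eq_of_isMinOn hmin' hmin hm' hm⟩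

theorem median_unique_minkowski_general
    {n : ℕ} (K : Set (EuclideanSpace ℝ (Fin n)))
    (hK_cpt : IsCompact K) (hK_conv : Convex ℝ K) (hK_int : (0 : EuclideanSpace ℝ (Fin n)) ∈ interior K)
    (F : EuclideanSpace ℝ (Fin n) → ℝ) (hF : F = gauge K)
    (C : ℝ) (hC : 1 ≤ C)
    (x₀ : EuclideanSpace ℝ (Fin n)) (R : ℝ) (hR : 0 < R)
    (μ : Measure (EuclideanSpace ℝ (Fin n))) [IsProbabilityMeasure μ]
    (hsupp : μ {z | F (z - x₀) ≤ R}ᶜ = 0)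
    (hnotline : ¬ ∃ a b : EuclideanSpace ℝ (Fin n),
      μ {z | ∃ t : ℝ, z = a + t • b}ᶜ = 0)
    (hconv : ∀ z, F (z - x₀) ≤ R →
      ∀ x y : EuclideanSpace ℝ (Fin n),
        F (x - x₀) ≤ C * (1 + C) * R → F (y - x₀) ≤ C * (1 + C) * R → x ≠ y →
        (∀ t : ℝ, x + t • (y - x) ≠ z) →
        StrictConvexOn ℝ (segment ℝ x y) (fun w => F (z - w))) :
    StrictConvexOn ℝ {x | F (x - x₀) ≤ C * (1 + C) * R}
        (fun x => ∫ z, F (z - x) ∂μ) ∧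
    (∃! m : EuclideanSpace ℝ (Fin n), F (m - x₀) ≤ C * (1 + C) * R ∧
      ∀ x, F (x - x₀) ≤ C * (1 + C) * R →
        (∫ z, F (z - m) ∂μ) ≤ ∫ z, F (z - x) ∂μ) := by
  subst hF
  have h₀ : K ∈ 𝓝 0 := mem_interior_iff_mem_nhds.mp hK_int
  have hK : Absorbent ℝ K := absorbent_nhds_zero h₀
  have hB := convex_setOf_gauge_sub_le hK_conv hK x₀ (C * (1 + C) * R)
  have hint := integrable_gauge_sub hK_conv h₀ (μ := μ) hsupp
  have hstrict : StrictConvexOn ℝ {x | gauge K (x - x₀) ≤ C * (1 + C) * R}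
      fun x => ∫ z, gauge K (z - x) ∂μ := by
    refine strictConvexOn_integral hB
      (fun z => (convexOn_gauge_sub_left hK_conv hK z).subset (subset_univ _) hB)
      (fun x _ => hint x) fun x hx y hy hxy => ?_
    have hoff_line : μ {z | ∃ t : ℝ, z = x + t • (y - x)}ᶜ ≠ 0 :=
      fun h => hnotline ⟨x, y - x, h⟩
    refine (pos_iff_ne_zero.2 hoff_line).trans_le ?_
    rw [← measure_inter_conull hsupp]
    exact measure_mono fun z ⟨hzL, hzR⟩ => hconv z hzR x y hx hy hxy fun t ht => hzL ⟨t, ht.symm⟩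
  refine ⟨hstrict, ?_⟩
  have hx₀ : x₀ ∈ {x | gauge K (x - x₀) ≤ C * (1 + C) * R} := by
    rw [mem_ofPred_eq, sub_self, gauge_zero]
    exact mul_nonneg (mul_nonneg (by linarith) (by linarith)) hR.le
  obtain ⟨L, hL⟩ := hK_conv.lipschitz_gauge h₀
  exact hstrict.existsUnique_isMinOn
    (isCompact_setOf_gauge_sub_le hK_conv h₀ hK_cpt.isBounded _ _) ⟨x₀, hx₀⟩
    (hL.integral_comp_sub hint).continuous.continuousOn

/-- Uniqueness of the median in the flat Minkowski model: if `F` is the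
Minkowski gauge of a compact convex body `K ⊂ ℝⁿ` with `0 ∈ int K`, `F(-v) ≤ C F(v)`,
`μ` is a Borel probability measure supported in `B̄(x₀,R)` whose support is not contained
in a single affine line, and for each `z ∈ B̄(x₀,R)` the function `x ↦ F(z-x)` is strictly
convex along every nonconstant segment of `B̄(x₀, C(1+C)R)` whose affine line misses `z`,
then the median functional `F_μ` is strictly convex on `B̄(x₀, C(1+C)R)` and has a unique
minimizer there. -/
theorem median_unique_minkowski
    {n : ℕ} (K : Set (EuclideanSpace ℝ (Fin n)))
    (hK_cpt : IsCompact K) (hK_conv : Convex ℝ K) (hK_int : (0 : EuclideanSpace ℝ (Fin n)) ∈ interior K)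
    (F : EuclideanSpace ℝ (Fin n) → ℝ) (hF : F = gauge K)
    (C : ℝ) (hC : 1 ≤ C) (hrev : ∀ v, F (-v) ≤ C * F v)
    (x₀ : EuclideanSpace ℝ (Fin n)) (R : ℝ) (hR : 0 < R)
    (μ : Measure (EuclideanSpace ℝ (Fin n))) [IsProbabilityMeasure μ]
    (hsupp : μ {z | F (z - x₀) ≤ R}ᶜ = 0)
    (hnotline : ¬ ∃ a b : EuclideanSpace ℝ (Fin n),
      μ {z | ∃ t : ℝ, z = a + t • b}ᶜ = 0)
    (hconv : ∀ z, F (z - x₀) ≤ R →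
      ∀ x y : EuclideanSpace ℝ (Fin n),
        F (x - x₀) ≤ C * (1 + C) * R → F (y - x₀) ≤ C * (1 + C) * R → x ≠ y →
        (∀ t : ℝ, x + t • (y - x) ≠ z) →
        StrictConvexOn ℝ (segment ℝ x y) (fun w => F (z - w))) :
    StrictConvexOn ℝ {x | F (x - x₀) ≤ C * (1 + C) * R}
        (fun x => ∫ z, F (z - x) ∂μ) ∧
    (∃! m : EuclideanSpace ℝ (Fin n), F (m - x₀) ≤ C * (1 + C) * R ∧
      ∀ x, F (x - x₀) ≤ C * (1 + C) * R →
        (∫ z, F (z - m) ∂μ) ≤ ∫ z, F (z - x) ∂μ) :=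
  median_unique_minkowski_general K hK_cpt hK_conv hK_int F hF C hC x₀ R hR μ hsupp hnotline hconv
end

section
/- Let μ be a compactly supported Borel probability measure on ℝⁿ (with the Euclidean norm ‖·‖) whose support is not contained in any affine line. Then the median functional F_μ(x) = ∫ ‖x−z‖ dμ(z) is strictly convex on ℝⁿ. -/
open MeasureTheory

/-- Strict convexity of the Euclidean median functional: if `μ` is a
compactly supported Borel probability measure on `ℝⁿ` whose support is not contained in
any affine line, then `F_μ(x) = ∫ ‖x - z‖ dμ(z)` is strictly convex on `ℝⁿ`. -/
theorem euclidean_median_strictConvex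
    {n : ℕ} (μ : Measure (EuclideanSpace ℝ (Fin n))) [IsProbabilityMeasure μ]
    (hcpt : ∃ s : Set (EuclideanSpace ℝ (Fin n)), IsCompact s ∧ μ sᶜ = 0)
    (hnotline : ¬ ∃ a b : EuclideanSpace ℝ (Fin n),
      μ {z | ∃ t : ℝ, z = a + t • b}ᶜ = 0) :
    StrictConvexOn ℝ (Set.univ : Set (EuclideanSpace ℝ (Fin n)))
      (fun x => ∫ z, ‖x - z‖ ∂μ) := by
  obtain ⟨s, hs, hsnull⟩ := hcpt
  obtain ⟨C, hC⟩ := hs.isBounded.exists_norm_le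
  have hmem : ∀ᵐ z ∂μ, z ∈ s := by
    rw [MeasureTheory.ae_iff]
    exact hsnull
  have hint : ∀ x : EuclideanSpace ℝ (Fin n), Integrable (fun z => ‖x - z‖) μ := by
    intro x
    refine Integrable.mono' (integrable_const (‖x‖ + C)) ?_ ?_
    · exact ((continuous_const.sub continuous_id).norm).aestronglyMeasurable
    · filter_upwards [hmem] with z hz
      have : ‖x - z‖ ≤ ‖x‖ + ‖z‖ := norm_sub_le x z
      have h2 := hC z hz
      simp only [norm_norm]
      linarith
  constructor
  · exact convex_univ
  intro x _ y _ hxy a b ha hb hab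
  set c : EuclideanSpace ℝ (Fin n) := a • x + b • y with hc
  have hdecomp : ∀ z : EuclideanSpace ℝ (Fin n), c - z = a • (x - z) + b • (y - z) := by
    intro z
    have h1 : a • z + b • z = z := by rw [← add_smul, hab, one_smul]
    rw [smul_sub, smul_sub, hc]
    conv_lhs => rw [← h1]
    abel
  set f : EuclideanSpace ℝ (Fin n) → ℝ :=
    fun z => a * ‖x - z‖ + b * ‖y - z‖ - ‖c - z‖ with hf
  have hfnonneg : ∀ z, 0 ≤ f z := by
    intro z
    have hle : ‖c - z‖ ≤ a * ‖x - z‖ + b * ‖y - z‖ := by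
      rw [hdecomp z]
      calc ‖a • (x - z) + b • (y - z)‖ ≤ ‖a • (x - z)‖ + ‖b • (y - z)‖ := norm_add_le _ _
        _ = a * ‖x - z‖ + b * ‖y - z‖ := by
            rw [norm_smul, norm_smul, Real.norm_eq_abs, Real.norm_eq_abs,
              abs_of_pos ha, abs_of_pos hb]
    simp only [hf]
    linarith
  have hintf : Integrable f μ :=
    (((hint x).const_mul a).add ((hint y).const_mul b)).sub (hint c)
  -- key: if f z = 0 then z lies on the line through x and y
  have hline : ∀ z, f z = 0 → ∃ t : ℝ, z = y + t • (x - y) := by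
    intro z hz
    have heq : ‖a • (x - z) + b • (y - z)‖ = ‖a • (x - z)‖ + ‖b • (y - z)‖ := by
      rw [norm_smul, norm_smul, Real.norm_eq_abs, Real.norm_eq_abs,
        abs_of_pos ha, abs_of_pos hb, ← hdecomp z]
      simp only [hf] at hz
      linarith
    have hray : SameRay ℝ (a • (x - z)) (b • (y - z)) := sameRay_iff_norm_add.mpr heq
    rcases hray with h0 | h0 | ⟨r, t, hr, ht, hrt⟩
    · -- a • (x - z) = 0 ⇒ z = x
      have hxz : x - z = 0 := by
        rcases smul_eq_zero.mp h0 with h | h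
        · exact absurd h (ne_of_gt ha)
        · exact h
      refine ⟨1, ?_⟩
      have : z = x := by
        have := sub_eq_zero.mp hxz
        exact this.symm
      rw [this, one_smul]
      abel
    · have hyz : y - z = 0 := by
        rcases smul_eq_zero.mp h0 with h | h
        · exact absurd h (ne_of_gt hb)
        · exact h
      refine ⟨0, ?_⟩
      have : z = y := (sub_eq_zero.mp hyz).symm
      rw [this, zero_smul, add_zero]
    · -- r • a • (x - z) = t • b • (y - z)
      set p : ℝ := r * a with hp
      set q : ℝ := t * b with hq
      have hp0 : 0 < p := mul_pos hr ha
      have hq0 : 0 < q := mul_pos ht hb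
      have hkey : p • (x - z) = q • (y - z) := by
        rw [hp, hq, mul_smul, mul_smul]; exact hrt
      by_cases hpq : p = q
      · exfalso
        rw [hpq] at hkey
        have : x - z = y - z := smul_right_injective _ (ne_of_gt hq0) hkey
        exact hxy (sub_left_injective this)
      · have hpd : p - q ≠ 0 := sub_ne_zero.mpr hpq
        refine ⟨p / (p - q), ?_⟩
        apply smul_right_injective (EuclideanSpace ℝ (Fin n)) hpd
        show (p - q) • z = (p - q) • (y + (p / (p - q)) • (x - y))
        have lhs : (p - q) • z = p • x - q • y := by
          have : p • x - p • z = q • y - q • z := by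
            rw [← smul_sub, ← smul_sub]; exact hkey
          rw [sub_smul]
          have := sub_eq_sub_iff_sub_eq_sub.mp this
          linear_combination (norm := abel) -this
        rw [lhs, smul_add, smul_smul, mul_div_cancel₀ _ hpd, smul_sub, sub_smul]
        abel
  -- positivity of the integral of f
  have hpos : 0 < ∫ z, f z ∂μ := by
    rw [integral_pos_iff_support_of_nonneg hfnonneg hintf]
    rw [pos_iff_ne_zero]
    intro hzero
    apply hnotline
    refine ⟨y, x - y, ?_⟩
    refine measure_mono_null ?_ hzero
    intro z hz
    simp only [Set.mem_compl_iff, Set.mem_setOf_eq] at hz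
    simp only [Function.mem_support]
    intro hfz
    exact hz (hline z hfz)
  have hsplit : ∫ z, f z ∂μ
      = a * (∫ z, ‖x - z‖ ∂μ) + b * (∫ z, ‖y - z‖ ∂μ) - ∫ z, ‖c - z‖ ∂μ := by
    have h1 : Integrable (fun z => a * ‖x - z‖ + b * ‖y - z‖) μ :=
      ((hint x).const_mul a).add ((hint y).const_mul b)
    have h2 : Integrable (fun z => a * ‖x - z‖) μ := (hint x).const_mul a
    have h3 : Integrable (fun z => b * ‖y - z‖) μ := (hint y).const_mul b
    rw [hf]
    rw [integral_sub h1 (hint c), integral_add h2 h3,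
      integral_const_mul, integral_const_mul]
  simp only [smul_eq_mul]
  rw [hsplit] at hpos
  linarith
end

section
/- Let μ be a compactly supported Borel probability measure on ℝⁿ (with the Euclidean norm ‖·‖) whose support is not contained in any affine line. Then the median functional F_μ(x) = ∫ ‖x−z‖ dμ(z) attains its global infimum over ℝⁿ at exactly one point (the unique median of μ). -/
/-!
`F_μ` is `1`-Lipschitz and `F_μ x ≥ ‖x‖ - ∫ ‖z‖ dμ`, so it attains its minimum on a proper space.
If `y ≠ m` both minimize `F_μ`, then `2 F_μ (midpoint y m) = ∫ ‖(y - z) + (m - z)‖ dμ` is at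
least `F_μ y + F_μ m = ∫ (‖y - z‖ + ‖m - z‖) dμ`, so the triangle inequality is an equality for
`μ`-a.e. `z`. In a strictly convex space this puts `y - z` and `m - z` on a common ray, hence `z`
on the line through `y` and `m`.
-/

open MeasureTheory Filter

theorem exists_eq_add_smul_sub_of_sameRay_sub {R M : Type*} [Field R] [LinearOrder R]
    [IsStrictOrderedRing R] [AddCommGroup M] [Module R M] {y m z : M}
    (h : SameRay R (y - z) (m - z)) (hne : y ≠ m) : ∃ t : R, z = y + t • (m - y) := by
  obtain ⟨u, a, b, -, -, -, hy, hm⟩ := h.exists_eq_smul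
  have hym : m - y = (b - a) • u := by
    rw [sub_smul, ← hy, ← hm]; abel
  have hab : b - a ≠ 0 := by
    rintro hab
    rw [hab, zero_smul, sub_eq_zero] at hym
    exact hne hym.symm
  refine ⟨-(a / (b - a)), ?_⟩
  rw [hym, smul_smul, neg_mul, div_mul_cancel₀ a hab, neg_smul, ← hy]
  abel

namespace MeasureTheory

theorem ae_norm_add_eq_of_integral_norm_add_le {E Ω : Type*} [NormedAddCommGroup E]
    {_ : MeasurableSpace Ω} {μ : Measure Ω} {f g : Ω → E}
    (hf : Integrable f μ) (hg : Integrable g μ)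
    (h : ∫ ω, ‖f ω‖ ∂μ + ∫ ω, ‖g ω‖ ∂μ ≤ ∫ ω, ‖f ω + g ω‖ ∂μ) :
    ∀ᵐ ω ∂μ, ‖f ω + g ω‖ = ‖f ω‖ + ‖g ω‖ := by
  have hsum : Integrable (fun ω => ‖f ω‖ + ‖g ω‖) μ := hf.norm.add hg.norm
  refine (integral_eq_iff_of_ae_le (hf.add hg).norm hsum
    (Eventually.of_forall fun ω => norm_add_le _ _)).mp ?_
  exact le_antisymm (integral_mono (hf.add hg).norm hsum fun ω => norm_add_le _ _)
    (by rwa [integral_add hf.norm hg.norm])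

variable {E : Type*} [NormedAddCommGroup E] [MeasurableSpace E]

noncomputable def medianFunctional (μ : Measure E) (x : E) : ℝ := ∫ z, ‖x - z‖ ∂μ

theorem medianFunctional_midpoint [NormedSpace ℝ E] (μ : Measure E) (x y : E) :
    2 * medianFunctional μ (midpoint ℝ x y) = ∫ z, ‖(x - z) + (y - z)‖ ∂μ := by
  rw [medianFunctional, ← integral_const_mul]
  congr 1 with z
  rw [← Real.norm_two, ← norm_smul, midpoint_eq_smul_add, invOf_eq_inv]
  congr 1
  module

theorem integrable_id_of_ae_mem_compact [OpensMeasurableSpace E]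
    {μ : Measure E} [IsFiniteMeasure μ] {s : Set E} (hs : IsCompact s) (hμs : μ sᶜ = 0) :
    Integrable id μ := by
  have hae : ∀ᵐ z ∂μ, z ∈ s := by rwa [ae_iff]
  rw [← Measure.restrict_eq_self_of_ae_mem hae]
  exact continuous_id.continuousOn.integrableOn_compact hs

theorem integrable_norm_sub {μ : Measure E} [IsFiniteMeasure μ] (hμ : Integrable id μ) (x : E) :
    Integrable (fun z => ‖x - z‖) μ :=
  ((integrable_const x).sub hμ).norm

section ProbabilityMeasure

variable {μ : Measure E} [IsProbabilityMeasure μ]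

theorem lipschitzWith_medianFunctional (hμ : Integrable id μ) :
    LipschitzWith 1 (medianFunctional μ) := by
  refine LipschitzWith.of_dist_le_mul fun x y => ?_
  rw [Real.dist_eq, NNReal.coe_one, one_mul, dist_eq_norm, medianFunctional, medianFunctional,
    ← integral_sub (integrable_norm_sub hμ x) (integrable_norm_sub hμ y)]
  calc |∫ z, (‖x - z‖ - ‖y - z‖) ∂μ| ≤ ∫ z, |‖x - z‖ - ‖y - z‖| ∂μ :=
        abs_integral_le_integral_abs
    _ ≤ ∫ _z, ‖x - y‖ ∂μ := by
        refine integral_mono ((integrable_norm_sub hμ x).sub (integrable_norm_sub hμ y)).abs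
          (integrable_const _) fun z => ?_
        simpa only [sub_sub_sub_cancel_right] using abs_norm_sub_norm_le (x - z) (y - z)
    _ = ‖x - y‖ := by simp

theorem norm_sub_integral_norm_le_medianFunctional (hμ : Integrable id μ) (x : E) :
    ‖x‖ - ∫ z, ‖z‖ ∂μ ≤ medianFunctional μ x := by
  have hnorm : Integrable (fun z => ‖z‖) μ := hμ.norm
  have h : ∫ z, (‖x‖ - ‖z‖) ∂μ ≤ ∫ z, ‖x - z‖ ∂μ :=
    integral_mono ((integrable_const ‖x‖).sub hnorm) (integrable_norm_sub hμ x)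
      fun z => norm_sub_norm_le x z
  rwa [integral_sub (integrable_const _) hnorm, integral_const, probReal_univ, one_smul] at h

theorem tendsto_medianFunctional_cocompact [ProperSpace E] (hμ : Integrable id μ) :
    Tendsto (medianFunctional μ) (cocompact E) atTop :=
  tendsto_atTop_mono (norm_sub_integral_norm_le_medianFunctional hμ)
    (tendsto_atTop_add_const_right _ _ tendsto_norm_cocompact_atTop)

theorem exists_forall_medianFunctional_le [ProperSpace E] (hμ : Integrable id μ) :
    ∃ m, ∀ x, medianFunctional μ m ≤ medianFunctional μ x :=
  (lipschitzWith_medianFunctional hμ).continuous.exists_forall_le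
    (tendsto_medianFunctional_cocompact hμ)

theorem ae_eq_add_smul_sub_of_medianFunctional_min [NormedSpace ℝ E] [StrictConvexSpace ℝ E]
    (hμ : Integrable id μ) {y m : E} (hy : ∀ x, medianFunctional μ y ≤ medianFunctional μ x)
    (hm : ∀ x, medianFunctional μ m ≤ medianFunctional μ x) (hne : y ≠ m) :
    ∀ᵐ z ∂μ, ∃ t : ℝ, z = y + t • (m - y) := by
  have hmid : ∫ z, ‖y - z‖ ∂μ + ∫ z, ‖m - z‖ ∂μ ≤ ∫ z, ‖(y - z) + (m - z)‖ ∂μ := by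
    change medianFunctional μ y + medianFunctional μ m ≤ _
    rw [← medianFunctional_midpoint]
    linarith [hy (midpoint ℝ y m), hm (midpoint ℝ y m)]
  filter_upwards [ae_norm_add_eq_of_integral_norm_add_le ((integrable_const y).sub hμ)
    ((integrable_const m).sub hμ) hmid] with z hz
  exact exists_eq_add_smul_sub_of_sameRay_sub (sameRay_iff_norm_add.mpr hz) hne

end ProbabilityMeasure

end MeasureTheory

/-- Existence and uniqueness of the Euclidean median: if `μ` is a
compactly supported Borel probability measure on `ℝⁿ` whose support is not contained in
any affine line, then `F_μ(x) = ∫ ‖x - z‖ dμ(z)` attains its global infimum over `ℝⁿ`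
at exactly one point. -/
theorem euclidean_median_exists_unique
    {n : ℕ} (μ : Measure (EuclideanSpace ℝ (Fin n))) [IsProbabilityMeasure μ]
    (hcpt : ∃ s : Set (EuclideanSpace ℝ (Fin n)), IsCompact s ∧ μ sᶜ = 0)
    (hnotline : ¬ ∃ a b : EuclideanSpace ℝ (Fin n),
      μ {z | ∃ t : ℝ, z = a + t • b}ᶜ = 0) :
    ∃! m : EuclideanSpace ℝ (Fin n),
      ∀ x : EuclideanSpace ℝ (Fin n), (∫ z, ‖m - z‖ ∂μ) ≤ ∫ z, ‖x - z‖ ∂μ := by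
  obtain ⟨s, hs, hμs⟩ := hcpt
  have hμ := integrable_id_of_ae_mem_compact hs hμs
  obtain ⟨m, hm⟩ := exists_forall_medianFunctional_le hμ
  refine ⟨m, hm, fun y hy => by_contra fun hne => hnotline ⟨y, m - y, ?_⟩⟩
  have hline := ae_eq_add_smul_sub_of_medianFunctional_min hμ hy hm hne
  rwa [ae_iff, ← Set.compl_ofPred] at hline
end

section
/- Let F be the Minkowski gauge of a compact convex body K ⊂ ℝⁿ with 0 in its interior, assume F is C¹ on ℝⁿ∖{0}, and let μ be a compactly supported Borel probability measure on ℝⁿ. Then for every x ∈ ℝⁿ and every v ∈ ℝⁿ, the one-sided directional derivative of F_μ at x in direction v exists and equals lim_{t→0⁺} (F_μ(x+tv) − F_μ(x))/t = ⟨D F_{μ_x}(x), v⟩ + μ({x})·F(−v). -/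
/-!
Removing the atom at `x` splits `F_μ = F_{μ_x} + μ({x}) F(x - ·)`. Since `F` is Lipschitz
and differentiable off `0`, while `μ_x` does not charge `x`, differentiation under the integral
sign makes `F_{μ_x}` differentiable at `x`. The atom contributes `μ({x}) F(-t v) = t μ({x}) F(-v)`
for `t ≥ 0`, by positive homogeneity of the gauge.
-/

open MeasureTheory Metric

open scoped NNReal

theorem MeasureTheory.Measure.sub_smul_dirac_eq_restrict_compl {α : Type*} [MeasurableSpace α]
    [MeasurableSingletonClass α] (μ : Measure α) [IsFiniteMeasure μ] (x : α) :
    μ - μ {x} • Measure.dirac x = μ.restrict {x}ᶜ := by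
  calc μ - μ {x} • Measure.dirac x = μ.restrict {x}ᶜ + μ.restrict {x} - μ.restrict {x} := by
        rw [add_comm, μ.restrict_add_restrict_compl (measurableSet_singleton x),
          Measure.restrict_singleton]
    _ = μ.restrict {x}ᶜ := Measure.add_sub_cancel

theorem Continuous.integrable_of_measure_compl_eq_zero {X G : Type*} [TopologicalSpace X]
    [T2Space X] [MeasurableSpace X] [OpensMeasurableSpace X] [NormedAddCommGroup G]
    {μ : Measure X} [IsFiniteMeasureOnCompacts μ] {f : X → G} (hf : Continuous f) {s : Set X}
    (hs : IsCompact s) (hμs : μ sᶜ = 0) : Integrable f μ := by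
  rw [← Measure.restrict_eq_self_of_ae_mem (ae_iff.mpr hμs)]
  exact hf.continuousOn.integrableOn_compact hs

theorem hasFDerivAt_integral_comp_sub {E : Type*} [NormedAddCommGroup E] [NormedSpace ℝ E]
    [FiniteDimensional ℝ E] [MeasurableSpace E] [BorelSpace E] {f : E → ℝ} {C : ℝ≥0}
    (hf : LipschitzWith C f) {ν : Measure E} [IsFiniteMeasure ν] {x : E}
    (hdiff : ∀ᵐ z ∂ν, DifferentiableAt ℝ f (z - x))
    (hint : Integrable (fun z => f (z - x)) ν) :
    HasFDerivAt (fun y => ∫ z, f (z - y) ∂ν) (∫ z, -fderiv ℝ f (z - x) ∂ν) x := by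
  have hmeas : ∀ y, AEStronglyMeasurable (fun z => f (z - y)) ν := fun y =>
    (hf.continuous.comp (continuous_sub_right y)).aestronglyMeasurable
  have hlip : ∀ z, ∀ y ∈ ball x 1, ‖f (z - y) - f (z - x)‖ ≤ C * ‖y - x‖ := fun z y _ => by
    simpa only [dist_eq_norm, sub_sub_sub_cancel_left, norm_sub_rev x y] using
      hf.dist_le_mul (z - y) (z - x)
  refine (hasFDerivAt_integral_of_dominated_loc_of_lip' (ball_mem_nhds x one_pos)
    (fun y _ => hmeas y) hint ?_ (ae_of_all _ hlip) (integrable_const (C : ℝ)) ?_).2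
  · exact ((measurable_fderiv ℝ f).comp (measurable_sub_const x)).neg.aestronglyMeasurable
  · filter_upwards [hdiff] with z hz
    simpa [Function.comp_def] using hz.hasFDerivAt.comp x ((hasFDerivAt_id x).const_sub z)

theorem median_directional_derivative_general
    {n : ℕ} (K : Set (EuclideanSpace ℝ (Fin n)))
    (hK_conv : Convex ℝ K)
    (hK_int : (0 : EuclideanSpace ℝ (Fin n)) ∈ interior K)
    (F : EuclideanSpace ℝ (Fin n) → ℝ) (hF : F = gauge K)
    (hFsmooth : ContDiffOn ℝ 1 F {(0 : EuclideanSpace ℝ (Fin n))}ᶜ)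
    (μ : Measure (EuclideanSpace ℝ (Fin n))) [IsProbabilityMeasure μ]
    (hcpt : ∃ s : Set (EuclideanSpace ℝ (Fin n)), IsCompact s ∧ μ sᶜ = 0) :
    ∀ x v : EuclideanSpace ℝ (Fin n),
      Filter.Tendsto
        (fun t : ℝ =>
          ((∫ z, F (z - (x + t • v)) ∂μ) - ∫ z, F (z - x) ∂μ) / t)
        (nhdsWithin 0 (Set.Ioi 0))
        (nhds
          ((fderiv ℝ (fun y => ∫ z, F (z - y) ∂(μ - μ {x} • Measure.dirac x)) x) v +
            (μ {x}).toReal * F (-v))) := by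
  intro x v
  obtain ⟨s, hs, hμs⟩ := hcpt
  obtain ⟨C, hlip⟩ : ∃ C, LipschitzWith C F :=
    hF ▸ hK_conv.lipschitz_gauge (mem_interior_iff_mem_nhds.mp hK_int)
  have hint : ∀ y, Integrable (fun z => F (z - y)) μ := fun y =>
    (hlip.continuous.comp (continuous_sub_right y)).integrable_of_measure_compl_eq_zero hs hμs
  have hdiff : ∀ᵐ z ∂μ.restrict {x}ᶜ, DifferentiableAt ℝ F (z - x) := by
    filter_upwards [ae_restrict_mem (measurableSet_singleton x).compl] with z hz
    exact (hFsmooth.differentiableOn one_ne_zero).differentiableAt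
      (isOpen_compl_singleton.mem_nhds (sub_ne_zero.mpr hz))
  have hD := hasFDerivAt_integral_comp_sub hlip hdiff (hint x).restrict
  have hsplit : ∀ t : ℝ, 0 ≤ t → ∫ z, F (z - (x + t • v)) ∂μ =
      ∫ z in {x}ᶜ, F (z - (x + t • v)) ∂μ + t * ((μ {x}).toReal * F (-v)) := fun t ht => by
    rw [← integral_add_compl (measurableSet_singleton x) (hint _), integral_singleton,
      show x - (x + t • v) = t • -v by rw [smul_neg]; abel, hF, gauge_smul_of_nonneg ht,
      smul_eq_mul, measureReal_def]
    ring
  rw [μ.sub_smul_dirac_eq_restrict_compl, hD.fderiv]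
  refine ((hD.hasLineDerivAt v).tendsto_slope_zero_right.add_const _).congr' ?_
  filter_upwards [self_mem_nhdsWithin] with t (ht : 0 < t)
  have h0 := hsplit 0 le_rfl
  rw [zero_smul, add_zero] at h0
  rw [hsplit t ht.le, h0, smul_eq_mul]
  field_simp
  ring

/-- One-sided directional derivative of the median functional: for `F`
the Minkowski gauge of a compact convex body (`C¹` away from `0`) and `μ` a compactly
supported Borel probability measure on `ℝⁿ`, at every `x` and in every direction `v`,
`lim_{t→0⁺} (F_μ(x+tv) - F_μ(x))/t = ⟨D F_{μ_x}(x), v⟩ + μ({x})·F(-v)`,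
where `μ_x = μ - μ({x})·δ_x`. -/
theorem median_directional_derivative
    {n : ℕ} (K : Set (EuclideanSpace ℝ (Fin n)))
    (hK_cpt : IsCompact K) (hK_conv : Convex ℝ K)
    (hK_int : (0 : EuclideanSpace ℝ (Fin n)) ∈ interior K)
    (F : EuclideanSpace ℝ (Fin n) → ℝ) (hF : F = gauge K)
    (hFsmooth : ContDiffOn ℝ 1 F {(0 : EuclideanSpace ℝ (Fin n))}ᶜ)
    (μ : Measure (EuclideanSpace ℝ (Fin n))) [IsProbabilityMeasure μ]
    (hcpt : ∃ s : Set (EuclideanSpace ℝ (Fin n)), IsCompact s ∧ μ sᶜ = 0) :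
    ∀ x v : EuclideanSpace ℝ (Fin n),
      Filter.Tendsto
        (fun t : ℝ =>
          ((∫ z, F (z - (x + t • v)) ∂μ) - ∫ z, F (z - x) ∂μ) / t)
        (nhdsWithin 0 (Set.Ioi 0))
        (nhds
          ((fderiv ℝ (fun y => ∫ z, F (z - y) ∂(μ - μ {x} • Measure.dirac x)) x) v +
            (μ {x}).toReal * F (-v))) :=
  median_directional_derivative_general K hK_conv hK_int F hF hFsmooth μ hcpt
end

section
/- Let F be the Minkowski gauge of a compact convex body K ⊂ ℝⁿ with 0 in its interior, with F of class C¹ on ℝⁿ∖{0}, and assume the Legendre map ℓ is a homeomorphism of ℝⁿ onto (ℝⁿ)*. Let p > 1, let μ be a compactly supported Borel probability measure, and let a ↦ x(a) be a C¹ path solving x′(a) = ℓ⁻¹(−D E_{μ,p}(x(a))). Then for every a, (d/da) E_{μ,p}(x(a)) = −F*(−D E_{μ,p}(x(a)))²; in particular a ↦ E_{μ,p}(x(a)) is nonincreasing, strictly decreasing while D E_{μ,p}(x(a)) ≠ 0. -/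
/-
Along the flow the chain rule gives `(E ∘ γ)' = DE(γ)(ℓ⁻¹ ξ) = -ξ(ℓ⁻¹ ξ)` with `ξ = -DE(γ)`, so
everything rests on the duality identity `ξ(ℓ⁻¹ ξ) = F*(ξ)²`. Since `F` is positively homogeneous
and subadditive, Euler's identity `DF(v) v = F v` and the subgradient bound `DF(v) ≤ F` hold;
with `ℓ v = F v • DF(v)` they show that `ℓ v` attains its maximum `F v` on `{F ≤ 1}` at `v / F v`
and that `ℓ v (v) = F v ²`. As `K` is bounded, `F v > 0` for `v ≠ 0`, whence strict decrease.
The energy is differentiable by differentiation under the integral sign: `F ^ p` is `C¹` on all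
of `ℝⁿ`, because `p > 1` and `‖DF‖ ≤ C` whenever `F ≤ C ‖·‖`.
-/

open MeasureTheory Filter Set Metric Asymptotics Topology

theorem isLittleO_norm_rpow_id {V : Type*} [NormedAddCommGroup V] {p : ℝ} (hp : 1 < p) :
    (fun w : V => ‖w‖ ^ p) =o[𝓝 0] fun w => w := by
  have hsmall : (fun w : V => ‖w‖ ^ (p - 1)) =o[𝓝 0] fun _ => (1 : ℝ) := by
    refine (isLittleO_one_iff ℝ).2 ?_
    have : Continuous fun w : V => ‖w‖ ^ (p - 1) :=
      continuous_norm.rpow_const fun _ => Or.inr (sub_pos.2 hp).le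
    simpa [Real.zero_rpow (sub_pos.2 hp).ne'] using this.tendsto 0
  have := hsmall.mul_isBigO (isBigO_refl (fun w : V => ‖w‖) (𝓝 0))
  simp only [one_mul] at this
  refine (isLittleO_norm_right.1 this).congr_left fun w => ?_
  rw [← Real.rpow_add_one' (norm_nonneg w) (by linarith), sub_add_cancel]

section

variable {V : Type*} [NormedAddCommGroup V] [NormedSpace ℝ V]

theorem hasFDerivAt_rpow_zero_of_le_mul_norm {F : V → ℝ} (hnn : ∀ w, 0 ≤ F w) {C : ℝ}
    (hC : 0 ≤ C) (hbound : ∀ w, F w ≤ C * ‖w‖) {p : ℝ} (hp : 1 < p) :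
    HasFDerivAt (fun w => F w ^ p) (0 : V →L[ℝ] ℝ) 0 := by
  have hF0 : F 0 = 0 := le_antisymm (by simpa using hbound 0) (hnn 0)
  have hO : (fun w => F w ^ p) =O[𝓝 0] fun w : V => ‖w‖ ^ p := by
    refine IsBigO.of_bound (C ^ p) (Eventually.of_forall fun w => ?_)
    rw [Real.norm_of_nonneg (Real.rpow_nonneg (hnn w) p),
      Real.norm_of_nonneg (Real.rpow_nonneg (norm_nonneg w) p),
      ← Real.mul_rpow hC (norm_nonneg w)]
    exact Real.rpow_le_rpow (hnn w) (hbound w) (by linarith)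
  rw [hasFDerivAt_iff_isLittleO_nhds_zero]
  simpa [hF0, Real.zero_rpow (by linarith : p ≠ 0)] using
    hO.trans_isLittleO (isLittleO_norm_rpow_id hp)

theorem HasFDerivAt.half_smul_fderiv_sq {F : V → ℝ} {F' : V →L[ℝ] ℝ} {v : V}
    (hd : HasFDerivAt F F' v) :
    (1 / 2 : ℝ) • fderiv ℝ (fun w => F w ^ 2) v = F v • F' := by
  rw [(hd.pow 2).fderiv, smul_smul]
  congr 1
  ring

structure IsSublinear (F : V → ℝ) : Prop where
  map_smul_of_nonneg : ∀ t : ℝ, 0 ≤ t → ∀ w, F (t • w) = t * F w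
  map_add_le : ∀ x y, F (x + y) ≤ F x + F y

theorem isSublinear_gauge {K : Set V} (hc : Convex ℝ K) (ha : Absorbent ℝ K) :
    IsSublinear (gauge K) where
  map_smul_of_nonneg t ht w := by rw [gauge_smul_of_nonneg ht, smul_eq_mul]
  map_add_le := gauge_add_le hc ha

namespace IsSublinear

variable {F : V → ℝ} {F' : V →L[ℝ] ℝ} {v : V}

theorem map_zero (hF : IsSublinear F) : F 0 = 0 := by
  simpa using hF.map_smul_of_nonneg 0 le_rfl 0

theorem apply_self_of_hasFDerivAt (hF : IsSublinear F) (hd : HasFDerivAt F F' v) :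
    F' v = F v := by
  have hray : HasDerivAt (fun t : ℝ => F (t • v)) (F' v) 1 :=
    hd.comp_hasDerivAt_of_eq 1 ((hasDerivAt_id 1).smul_const v) (one_smul ℝ v).symm
      |>.congr_deriv (by simp)
  have hlin : HasDerivAt (fun t : ℝ => F (t • v)) (F v) 1 := by
    refine (hasDerivAt_mul_const (F v)).congr_of_eventuallyEq ?_
    filter_upwards [eventually_gt_nhds one_pos] with t ht
    exact hF.map_smul_of_nonneg t ht.le v
  exact hray.unique hlin

theorem apply_le_of_hasFDerivAt (hF : IsSublinear F) (hd : HasFDerivAt F F' v) (y : V) :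
    F' y ≤ F y := by
  have hline : HasDerivAt (fun t : ℝ => F (v + t • y)) (F' y) 0 :=
    hd.comp_hasDerivAt_of_eq 0 (((hasDerivAt_id 0).smul_const y).const_add v) (by simp)
      |>.congr_deriv (by simp)
  refine le_of_tendsto hline.tendsto_slope_zero_right ?_
  filter_upwards [self_mem_nhdsWithin] with t (ht : 0 < t)
  have := hF.map_add_le v (t • y)
  rw [hF.map_smul_of_nonneg t ht.le] at this
  rw [zero_add, zero_smul, add_zero, smul_eq_mul, inv_mul_le_iff₀ ht]
  linarith

theorem norm_le_of_hasFDerivAt (hF : IsSublinear F) (hd : HasFDerivAt F F' v) {C : ℝ}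
    (hC : 0 ≤ C) (hbound : ∀ w, F w ≤ C * ‖w‖) : ‖F'‖ ≤ C := by
  refine F'.opNorm_le_bound hC fun y => abs_le.2 ⟨?_, ?_⟩
  · have := (hF.apply_le_of_hasFDerivAt hd (-y)).trans (hbound (-y))
    rw [map_neg, norm_neg] at this
    linarith
  · exact (hF.apply_le_of_hasFDerivAt hd y).trans (hbound y)

theorem isGreatest_smul_image (hF : IsSublinear F) (hd : HasFDerivAt F F' v) (hv : 0 < F v)
    {c : ℝ} (hc : 0 ≤ c) : IsGreatest ((c • F') '' {y | F y ≤ 1}) c := by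
  refine ⟨⟨(F v)⁻¹ • v, ?_, ?_⟩, ?_⟩
  · simp [hF.map_smul_of_nonneg _ (inv_nonneg.2 hv.le), inv_mul_cancel₀ hv.ne']
  · simp [hF.apply_self_of_hasFDerivAt hd]
    field_simp
  · rintro _ ⟨y, hy, rfl⟩
    simpa using mul_le_of_le_one_right hc ((hF.apply_le_of_hasFDerivAt hd y).trans hy)

theorem smul_apply_self_of_hasFDerivAt (hF : IsSublinear F) (hd : HasFDerivAt F F' v) :
    (F v • F') v = F v ^ 2 := by
  rw [smul_apply, hF.apply_self_of_hasFDerivAt hd, smul_eq_mul, sq]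

theorem contDiff_rpow (hF : IsSublinear F) (hnn : ∀ w, 0 ≤ F w) {C : ℝ} (hC : 0 ≤ C)
    (hbound : ∀ w, F w ≤ C * ‖w‖) (hsmooth : ContDiffOn ℝ 1 F {0}ᶜ) {p : ℝ} (hp : 1 < p) :
    ContDiff ℝ 1 (fun w => F w ^ p) := by
  have hd : ∀ w, w ≠ 0 → HasFDerivAt F (fderiv ℝ F w) w := fun w hw =>
    ((hsmooth.differentiableOn one_ne_zero).differentiableAt
      (isOpen_compl_singleton.mem_nhds hw)).hasFDerivAt
  set f' : V → V →L[ℝ] ℝ := fun w => (p * F w ^ (p - 1)) • fderiv ℝ F w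
  have hf'0 : f' 0 = 0 := by simp [f', hF.map_zero, Real.zero_rpow (sub_pos.2 hp).ne']
  have hf'_le : ∀ w, ‖f' w‖ ≤ p * (C * ‖w‖) ^ (p - 1) * C := by
    intro w
    rcases eq_or_ne w 0 with rfl | hw
    · rw [hf'0, norm_zero]; positivity
    rw [norm_smul, Real.norm_of_nonneg (by have := hnn w; positivity)]
    gcongr
    · exact hnn w
    · exact hbound w
    · exact hF.norm_le_of_hasFDerivAt (hd w hw) hC hbound
  rw [contDiff_one_iff_hasFDerivAt]
  refine ⟨f', ?_, fun w => ?_⟩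
  · refine continuous_iff_continuousAt.2 fun w => ?_
    rcases eq_or_ne w 0 with rfl | hw
    · have hlim : Continuous fun w : V => p * (C * ‖w‖) ^ (p - 1) * C :=
        (continuous_const.mul ((continuous_const.mul continuous_norm).rpow_const
          fun _ => Or.inr (sub_pos.2 hp).le)).mul continuous_const
      rw [ContinuousAt, hf'0]
      exact squeeze_zero_norm hf'_le
        (by simpa [Real.zero_rpow (sub_pos.2 hp).ne'] using hlim.tendsto 0)
    · have hw' : {(0 : V)}ᶜ ∈ 𝓝 w := isOpen_compl_singleton.mem_nhds hw
      exact (continuousAt_const.mul ((hsmooth.continuousOn.continuousAt hw').rpow_const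
        (Or.inr (sub_pos.2 hp).le))).smul
        ((hsmooth.continuousOn_fderiv_of_isOpen isOpen_compl_singleton le_rfl).continuousAt hw')
  · rcases eq_or_ne w 0 with rfl | hw
    · rw [hf'0]; exact hasFDerivAt_rpow_zero_of_le_mul_norm hnn hC hbound hp
    · exact (hd w hw).rpow_const (Or.inr hp.le)

end IsSublinear

theorem exists_eq_smul_fderiv_of_rightInverse {F : V → ℝ} {ℓ : V → V →L[ℝ] ℝ}
    {ℓinv : (V →L[ℝ] ℝ) → V} (hd : ∀ v, v ≠ 0 → DifferentiableAt ℝ F v)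
    (hℓ : ∀ v, v ≠ 0 → ℓ v = (1 / 2 : ℝ) • fderiv ℝ (fun w => F w ^ 2) v) (hℓ0 : ℓ 0 = 0)
    (hright : Function.RightInverse ℓinv ℓ) {ξ : V →L[ℝ] ℝ} (hξ : ξ ≠ 0) :
    ∃ v, v ≠ 0 ∧ ℓinv ξ = v ∧ ξ = F v • fderiv ℝ F v := by
  have hv : ℓinv ξ ≠ 0 := fun h => hξ (by rw [← hright ξ, h, hℓ0])
  refine ⟨ℓinv ξ, hv, rfl, ?_⟩
  conv_lhs => rw [← hright ξ, hℓ _ hv]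
  exact (hd _ hv).hasFDerivAt.half_smul_fderiv_sq

theorem IsSublinear.apply_rightInverse_eq_sSup_sq {F : V → ℝ} {ℓ : V → V →L[ℝ] ℝ}
    {ℓinv : (V →L[ℝ] ℝ) → V} (hF : IsSublinear F) (hpos : ∀ v, v ≠ 0 → 0 < F v)
    (hd : ∀ v, v ≠ 0 → DifferentiableAt ℝ F v)
    (hℓ : ∀ v, v ≠ 0 → ℓ v = (1 / 2 : ℝ) • fderiv ℝ (fun w => F w ^ 2) v) (hℓ0 : ℓ 0 = 0)
    (hright : Function.RightInverse ℓinv ℓ) (ξ : V →L[ℝ] ℝ) :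
    ξ (ℓinv ξ) = sSup (ξ '' {y | F y ≤ 1}) ^ 2 := by
  rcases eq_or_ne ξ 0 with rfl | hξ
  · have h0 : ⇑(0 : V →L[ℝ] ℝ) '' {y | F y ≤ 1} = {0} :=
      Set.Nonempty.image_const ⟨0, by simp [hF.map_zero]⟩ 0
    rw [h0, csSup_singleton, zero_apply, sq, mul_zero]
  obtain ⟨v, hv, hvξ, rfl⟩ := exists_eq_smul_fderiv_of_rightInverse hd hℓ hℓ0 hright hξ
  rw [hvξ, (hF.isGreatest_smul_image (hd v hv).hasFDerivAt (hpos v hv) (hpos v hv).le).csSup_eq,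
    hF.smul_apply_self_of_hasFDerivAt (hd v hv).hasFDerivAt]

theorem exists_gauge_le_mul_norm {K : Set V} (hK : K ∈ 𝓝 0) :
    ∃ C, 0 ≤ C ∧ ∀ w, gauge K w ≤ C * ‖w‖ := by
  obtain ⟨r, hr, hball⟩ := Metric.mem_nhds_iff.1 hK
  refine ⟨r⁻¹, by positivity, fun w => ?_⟩
  rw [inv_mul_eq_div, le_div_iff₀' hr]
  exact mul_gauge_le_norm hball

end

theorem ContDiff.differentiable_integral_comp_sub {V G : Type*} [NormedAddCommGroup V]
    [NormedSpace ℝ V] [FiniteDimensional ℝ V] [MeasurableSpace V] [BorelSpace V]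
    [NormedAddCommGroup G] [NormedSpace ℝ G] [CompleteSpace G]
    {g : V → G} (hg : ContDiff ℝ 1 g) (μ : Measure V) [IsFiniteMeasure μ]
    {s : Set V} (hs : IsCompact s) (hμs : μ sᶜ = 0) :
    Differentiable ℝ (fun x => ∫ z, g (z - x) ∂μ) := by
  intro x₀
  have hae : ∀ᵐ z ∂μ, z ∈ s := ae_iff.2 hμs
  obtain ⟨B, hB⟩ := ((hs.prod (isCompact_closedBall x₀ 1)).image continuous_sub
    ).exists_bound_of_continuousOn (hg.continuous_fderiv one_ne_zero).continuousOn
  have hderiv : ∀ z x, HasFDerivAt (fun x => g (z - x)) (-fderiv ℝ g (z - x)) x := fun z x => by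
    have := ((hg.differentiable one_ne_zero) (z - x)).hasFDerivAt.comp x
      ((hasFDerivAt_id x).const_sub z)
    simpa [Function.comp_def] using this
  have hcont : ∀ x, Continuous fun z => g (z - x) := fun x =>
    hg.continuous.comp (continuous_sub_right x)
  refine (hasFDerivAt_integral_of_dominated_of_fderiv_le (bound := fun _ => B)
    (ball_mem_nhds x₀ one_pos) (Eventually.of_forall fun x => (hcont x).aestronglyMeasurable) ?_
    ((hg.continuous_fderiv one_ne_zero).comp (continuous_sub_right x₀)).neg.aestronglyMeasurable ?_
    (integrable_const B) (ae_of_all _ fun z x _ => hderiv z x)).differentiableAt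
  · rw [← Measure.restrict_eq_self_of_ae_mem hae]
    exact (hcont x₀).continuousOn.integrableOn_compact hs
  · filter_upwards [hae] with z hz x hx
    rw [norm_neg]
    exact hB _ ⟨(z, x), ⟨hz, ball_subset_closedBall hx⟩, rfl⟩

theorem Antitone.lt_of_hasDerivAt_neg {f : ℝ → ℝ} (hf : Antitone f) {f' a b : ℝ}
    (hd : HasDerivAt f f' a) (hf' : f' < 0) (hab : a < b) : f b < f a := by
  obtain ⟨t, hslope, ht⟩ := ((hd.tendsto_slope_zero_right.eventually (gt_mem_nhds hf')).and
    (Ioo_mem_nhdsGT (sub_pos.2 hab))).exists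
  rw [smul_eq_mul, inv_mul_lt_iff₀ ht.1, mul_zero, sub_neg] at hslope
  exact (hf (by linarith [ht.2])).trans_lt hslope

theorem p_mean_gradient_flow_dissipation_general
    {n : ℕ} (K : Set (EuclideanSpace ℝ (Fin n)))
    (hK_cpt : IsCompact K) (hK_conv : Convex ℝ K)
    (hK_int : (0 : EuclideanSpace ℝ (Fin n)) ∈ interior K)
    (F : EuclideanSpace ℝ (Fin n) → ℝ) (hF : F = gauge K)
    (hFsmooth : ContDiffOn ℝ 1 F {(0 : EuclideanSpace ℝ (Fin n))}ᶜ)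
    (ℓ : EuclideanSpace ℝ (Fin n) → (EuclideanSpace ℝ (Fin n) →L[ℝ] ℝ))
    (hℓ : ∀ v, v ≠ 0 → ℓ v = (1 / 2 : ℝ) • fderiv ℝ (fun w => F w ^ 2) v)
    (hℓ0 : ℓ 0 = 0)
    (ℓinv : (EuclideanSpace ℝ (Fin n) →L[ℝ] ℝ) → EuclideanSpace ℝ (Fin n))
    (hright : Function.RightInverse ℓinv ℓ)
    (p : ℝ) (hp : 1 < p)
    (μ : Measure (EuclideanSpace ℝ (Fin n))) [IsProbabilityMeasure μ]
    (hcpt : ∃ s : Set (EuclideanSpace ℝ (Fin n)), IsCompact s ∧ μ sᶜ = 0)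
    (E : EuclideanSpace ℝ (Fin n) → ℝ)
    (hE : E = fun x => ∫ z, F (z - x) ^ p ∂μ)
    (γ : ℝ → EuclideanSpace ℝ (Fin n))
    (hode : ∀ a : ℝ, HasDerivAt γ (ℓinv (-(fderiv ℝ E (γ a)))) a) :
    (∀ a : ℝ, HasDerivAt (fun b => E (γ b))
        (-(sSup ((-(fderiv ℝ E (γ a))) '' {y | F y ≤ 1})) ^ 2) a) ∧
    Antitone (fun a => E (γ a)) ∧
    (∀ a b : ℝ, a < b → fderiv ℝ E (γ a) ≠ 0 → E (γ b) < E (γ a)) := by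
  have hK0 : K ∈ 𝓝 0 := mem_interior_iff_mem_nhds.1 hK_int
  have hsub : IsSublinear F := hF ▸ isSublinear_gauge hK_conv (absorbent_nhds_zero hK0)
  have hFpos : ∀ v, v ≠ 0 → 0 < F v := fun v hv =>
    hF ▸ (gauge_pos (absorbent_nhds_zero hK0) (hK_cpt.isVonNBounded ℝ)).2 hv
  have hFd : ∀ v, v ≠ 0 → DifferentiableAt ℝ F v := fun v hv =>
    (hFsmooth.differentiableOn one_ne_zero).differentiableAt (isOpen_compl_singleton.mem_nhds hv)
  obtain ⟨C, hC, hbound⟩ := exists_gauge_le_mul_norm hK0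
  obtain ⟨s, hs, hμs⟩ := hcpt
  have hEd : Differentiable ℝ E := hE ▸
    (hsub.contDiff_rpow (hF ▸ gauge_nonneg) hC (hF ▸ hbound) hFsmooth hp
      ).differentiable_integral_comp_sub μ hs hμs
  have hflow : ∀ a : ℝ, HasDerivAt (fun b => E (γ b))
      (-(sSup ((-(fderiv ℝ E (γ a))) '' {y | F y ≤ 1})) ^ 2) a := fun a => by
    rw [← hsub.apply_rightInverse_eq_sSup_sq hFpos hFd hℓ hℓ0 hright, neg_apply, neg_neg]
    exact (hEd (γ a)).hasFDerivAt.comp_hasDerivAt a (hode a)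
  have hanti : Antitone (fun a => E (γ a)) :=
    antitone_of_hasDerivAt_nonpos hflow fun a => neg_nonpos.2 (sq_nonneg _)
  refine ⟨hflow, hanti, fun a b hab hne => hanti.lt_of_hasDerivAt_neg (hflow a) ?_ hab⟩
  obtain ⟨v, hv, -, hξv⟩ := exists_eq_smul_fderiv_of_rightInverse hFd hℓ hℓ0 hright
    (neg_ne_zero.2 hne)
  rw [hξv, (hsub.isGreatest_smul_image (hFd v hv).hasFDerivAt (hFpos v hv) (hFpos v hv).le
    ).csSup_eq, neg_neg_iff_pos]
  exact pow_pos (hFpos v hv) 2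

/-- Energy dissipation along the gradient flow in the flat Minkowski
model: if `γ` solves `γ'(a) = ℓ⁻¹(-D E_{μ,p}(γ(a)))`, then
`(d/da) E_{μ,p}(γ(a)) = -F*(-D E_{μ,p}(γ(a)))²`; in particular `a ↦ E_{μ,p}(γ(a))` is
nonincreasing, and strictly decreasing while the derivative of `E_{μ,p}` is nonzero. -/
theorem p_mean_gradient_flow_dissipation
    {n : ℕ} (K : Set (EuclideanSpace ℝ (Fin n)))
    (hK_cpt : IsCompact K) (hK_conv : Convex ℝ K)
    (hK_int : (0 : EuclideanSpace ℝ (Fin n)) ∈ interior K)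
    (F : EuclideanSpace ℝ (Fin n) → ℝ) (hF : F = gauge K)
    (hFsmooth : ContDiffOn ℝ 1 F {(0 : EuclideanSpace ℝ (Fin n))}ᶜ)
    (ℓ : EuclideanSpace ℝ (Fin n) → (EuclideanSpace ℝ (Fin n) →L[ℝ] ℝ))
    (hℓ : ∀ v, v ≠ 0 → ℓ v = (1 / 2 : ℝ) • fderiv ℝ (fun w => F w ^ 2) v)
    (hℓ0 : ℓ 0 = 0)
    (ℓinv : (EuclideanSpace ℝ (Fin n) →L[ℝ] ℝ) → EuclideanSpace ℝ (Fin n))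
    (hleft : Function.LeftInverse ℓinv ℓ) (hright : Function.RightInverse ℓinv ℓ)
    (hℓcont : Continuous ℓ) (hℓinvcont : Continuous ℓinv)
    (p : ℝ) (hp : 1 < p)
    (μ : Measure (EuclideanSpace ℝ (Fin n))) [IsProbabilityMeasure μ]
    (hcpt : ∃ s : Set (EuclideanSpace ℝ (Fin n)), IsCompact s ∧ μ sᶜ = 0)
    (E : EuclideanSpace ℝ (Fin n) → ℝ)
    (hE : E = fun x => ∫ z, F (z - x) ^ p ∂μ)
    (γ : ℝ → EuclideanSpace ℝ (Fin n))
    (hode : ∀ a : ℝ, HasDerivAt γ (ℓinv (-(fderiv ℝ E (γ a)))) a) :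
    (∀ a : ℝ, HasDerivAt (fun b => E (γ b))
        (-(sSup ((-(fderiv ℝ E (γ a))) '' {y | F y ≤ 1})) ^ 2) a) ∧
    Antitone (fun a => E (γ a)) ∧
    (∀ a b : ℝ, a < b → fderiv ℝ E (γ a) ≠ 0 → E (γ b) < E (γ a)) :=
  p_mean_gradient_flow_dissipation_general K hK_cpt hK_conv hK_int F hF hFsmooth ℓ hℓ hℓ0 ℓinv
    hright p hp μ hcpt E hE γ hode
end
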